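/- arXiv:2503.14925 — 3 statements merged into one kernel-verified Lean document; each statement's English description precedes it below -/
import Mathlib

section
/- Let (X, S, Y) be jointly distributed with binary sensitive attribute S ∈ {0,1}. For any classifier f with f(X) statistically independent of S, the misclassification probability satisfies P(f(X) ≠ Y) ≥ P(S = s_min) · TV(P_{Y|S=0}, P_{Y|S=1}), where s_min is the minority outcome of S (i.e., P(S = s_min) ≤ 1/2). -/
/-!
Demographic parity makes the law `q` of `f(X)` given `S = s` the same for both groups. Within
group `s`, the pair `(f(X), Y)` couples `q` with `P_{Y|S=s}`, so
`TV(q, P_{Y|S=s}) ≤ P(f(X) ≠ Y | S = s)`. The triangle inequality through `q` bounds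
`TV(P_{Y|S=0}, P_{Y|S=1})` by `err₀ / p₀ + err₁ / p₁`, where `errₛ = P(f(X) ≠ Y, S = s)` and
`pₛ = P(S = s)`; multiplying by `min p₀ p₁ ≤ pₛ` leaves `err₀ + err₁ = P(f(X) ≠ Y)`.
-/

open Finset

theorem sum_abs_ite_sub_ite_eq {α β : Type*} [Fintype β] [DecidableEq β] (m : α → ℝ) (hm : 0 ≤ m)
    (u v : α → β) (a : α) :
    ∑ b, |(if u a = b then m a else 0) - (if v a = b then m a else 0)| =
      if u a ≠ v a then 2 * m a else 0 := by
  by_cases h : u a = v a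
  · simp [h]
  · rw [if_pos h, Fintype.sum_eq_add (u a) (v a) h]
    · simp only [↓reduceIte, h, Ne.symm h, sub_zero, zero_sub, abs_neg, abs_of_nonneg (hm a)]
      ring
    · rintro b ⟨hbu, hbv⟩
      simp [Ne.symm hbu, Ne.symm hbv]

theorem sum_abs_pushforward_sub_le {α β : Type*} [Fintype α] [Fintype β] [DecidableEq β]
    (m : α → ℝ) (hm : 0 ≤ m) (u v : α → β) :
    ∑ b, |∑ a, (if u a = b then m a else 0) - ∑ a, (if v a = b then m a else 0)| ≤
      2 * ∑ a, if u a ≠ v a then m a else 0 := by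
  calc ∑ b, |∑ a, (if u a = b then m a else 0) - ∑ a, (if v a = b then m a else 0)|
      ≤ ∑ b, ∑ a, |(if u a = b then m a else 0) - (if v a = b then m a else 0)| := by
        gcongr with b
        rw [← sum_sub_distrib]
        exact abs_sum_le_sum_abs _ _
    _ = ∑ a, if u a ≠ v a then 2 * m a else 0 := by
        rw [sum_comm]
        exact sum_congr rfl fun a _ => sum_abs_ite_sub_ite_eq m hm u v a
    _ = 2 * ∑ a, if u a ≠ v a then m a else 0 := by
        rw [mul_sum]
        exact sum_congr rfl fun a _ => by split_ifs <;> simp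

theorem sum_abs_prediction_sub_label_le {𝒳 𝒴 : Type*} [Fintype 𝒳] [Fintype 𝒴] [DecidableEq 𝒴]
    (Q : 𝒳 → 𝒴 → ℝ) (hQ : ∀ x y, 0 ≤ Q x y) (f : 𝒳 → 𝒴) :
    ∑ y, |∑ x, ∑ y', (if f x = y then Q x y' else 0) - ∑ x, Q x y| ≤
      2 * ∑ x, ∑ y, if f x ≠ y then Q x y else 0 := by
  simpa only [Fintype.sum_prod_type, sum_ite_eq', mem_univ, if_true] using
    sum_abs_pushforward_sub_le (fun z : 𝒳 × 𝒴 => Q z.1 z.2) (fun z => hQ z.1 z.2)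
      (fun z => f z.1) Prod.snd

theorem sum_abs_div_sub_eq {β : Type*} [Fintype β] (a g : β → ℝ) {p : ℝ} (hp : 0 < p) :
    ∑ b, |a b / p - g b| = (∑ b, |g b * p - a b|) / p := by
  rw [sum_div]
  refine sum_congr rfl fun b _ => ?_
  rw [← abs_of_pos hp, ← abs_div, abs_of_pos hp, abs_sub_comm, sub_div, mul_div_cancel_right₀ _ hp.ne']

theorem mul_div_le_of_le {c p e : ℝ} (hp : 0 < p) (he : 0 ≤ e) (hc : c ≤ p) :
    c * (e / p) ≤ e := by
  rw [mul_div_left_comm]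
  exact mul_le_of_le_one_right he ((div_le_one hp).2 hc)

theorem min_mul_half_sum_abs_div_sub_div_le {β : Type*} [Fintype β] (g a₀ a₁ : β → ℝ)
    {p₀ p₁ e₀ e₁ : ℝ} (hp₀ : 0 < p₀) (hp₁ : 0 < p₁)
    (h₀ : ∑ b, |g b * p₀ - a₀ b| ≤ 2 * e₀) (h₁ : ∑ b, |g b * p₁ - a₁ b| ≤ 2 * e₁) :
    min p₀ p₁ * (1 / 2 * ∑ b, |a₀ b / p₀ - a₁ b / p₁|) ≤ e₀ + e₁ := by
  have htri : ∑ b, |a₀ b / p₀ - a₁ b / p₁| ≤ 2 * e₀ / p₀ + 2 * e₁ / p₁ := calc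
    ∑ b, |a₀ b / p₀ - a₁ b / p₁| ≤ ∑ b, (|a₀ b / p₀ - g b| + |a₁ b / p₁ - g b|) :=
        sum_le_sum fun b _ => (abs_sub_le _ (g b) _).trans_eq (by rw [abs_sub_comm (g b)])
    _ = (∑ b, |g b * p₀ - a₀ b|) / p₀ + (∑ b, |g b * p₁ - a₁ b|) / p₁ := by
        rw [sum_add_distrib, sum_abs_div_sub_eq _ _ hp₀, sum_abs_div_sub_eq _ _ hp₁]
    _ ≤ 2 * e₀ / p₀ + 2 * e₁ / p₁ := by gcongr
  have he₀ : 0 ≤ e₀ := by linarith [h₀.trans' (sum_nonneg fun b _ => abs_nonneg _)]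
  have he₁ : 0 ≤ e₁ := by linarith [h₁.trans' (sum_nonneg fun b _ => abs_nonneg _)]
  have hm₀ := mul_div_le_of_le hp₀ he₀ (min_le_left p₀ p₁)
  have hm₁ := mul_div_le_of_le hp₁ he₁ (min_le_right p₀ p₁)
  calc min p₀ p₁ * (1 / 2 * ∑ b, |a₀ b / p₀ - a₁ b / p₁|)
      ≤ min p₀ p₁ * (e₀ / p₀ + e₁ / p₁) := by
        gcongr
        linarith [mul_div_assoc 2 e₀ p₀, mul_div_assoc 2 e₁ p₁]
    _ ≤ e₀ + e₁ := by rw [mul_add]; linarith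

theorem dp_misclassification_lower_bound_general
    {𝒳 𝒴 : Type*} [Fintype 𝒳] [Fintype 𝒴] [DecidableEq 𝒴]
    (P : 𝒳 × Bool × 𝒴 → ℝ)
    (hP0 : ∀ z, 0 ≤ P z)
    (pS : Bool → ℝ)
    (hpos : ∀ s, 0 < pS s)
    (f : 𝒳 → 𝒴)
    -- demographic parity: f(X) is independent of S
    (hindep : ∀ (y : 𝒴) (s : Bool),
      (∑ x, ∑ y', if f x = y then P (x, s, y') else 0) =
      (∑ x, ∑ s', ∑ y', if f x = y then P (x, s', y') else 0) * pS s) :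
    (∑ z : 𝒳 × Bool × 𝒴, if f z.1 ≠ z.2.2 then P z else 0) ≥
      min (pS false) (pS true) *
        ((1 / 2) * ∑ y, |(∑ x, P (x, false, y)) / pS false -
                         (∑ x, P (x, true, y)) / pS true|) := by
  have hgroup (s : Bool) := sum_abs_prediction_sub_label_le (fun x y => P (x, s, y))
    (fun x y => hP0 _) f
  simp only [hindep] at hgroup
  have herr : (∑ z : 𝒳 × Bool × 𝒴, if f z.1 ≠ z.2.2 then P z else 0) =
      (∑ x, ∑ y, if f x ≠ y then P (x, false, y) else 0) +
        ∑ x, ∑ y, if f x ≠ y then P (x, true, y) else 0 := by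
    simp only [Fintype.sum_prod_type, Fintype.sum_bool, sum_add_distrib, add_comm]
  rw [ge_iff_le, herr]
  exact min_mul_half_sum_abs_div_sub_div_le _ _ _ (hpos false) (hpos true)
    (hgroup false) (hgroup true)

/-- Let (X, S, Y) be jointly distributed with S ∈ {0,1} (Bool),
both groups of positive probability. For any classifier f with f(X) independent
of S, the misclassification probability satisfies
`P(f(X) ≠ Y) ≥ P(S = s_min) · TV(P_{Y|S=0}, P_{Y|S=1})`,
where `P(S = s_min) = min (P(S=0)) (P(S=1))`. -/
theorem dp_misclassification_lower_bound
    {𝒳 𝒴 : Type*} [Fintype 𝒳] [Fintype 𝒴] [DecidableEq 𝒴]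
    (P : 𝒳 × Bool × 𝒴 → ℝ)
    (hP0 : ∀ z, 0 ≤ P z) (hP1 : ∑ z, P z = 1)
    (pS : Bool → ℝ) (hpS : ∀ s, pS s = ∑ x, ∑ y, P (x, s, y))
    (hpos : ∀ s, 0 < pS s)
    (f : 𝒳 → 𝒴)
    -- demographic parity: f(X) is independent of S
    (hindep : ∀ (y : 𝒴) (s : Bool),
      (∑ x, ∑ y', if f x = y then P (x, s, y') else 0) =
      (∑ x, ∑ s', ∑ y', if f x = y then P (x, s', y') else 0) * pS s) :
    (∑ z : 𝒳 × Bool × 𝒴, if f z.1 ≠ z.2.2 then P z else 0) ≥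
      min (pS false) (pS true) *
        ((1 / 2) * ∑ y, |(∑ x, P (x, false, y)) / pS false -
                         (∑ x, P (x, true, y)) / pS true|) :=
  dp_misclassification_lower_bound_general P hP0 pS hpos f hindep
end

section
/- Under the conditions of the demographic parity lower bound, the bound P(f(X) ≠ Y) ≥ P(S = s_min) · TV(P_{Y|S=s_max}, P_{Y|S=s_min}) is achieved (in the sense of distribution matching) by any demographic-parity-satisfying randomized decision rule whose output distribution equals P_{Y|S=s_max}, provided for each s there exists a coupling attaining the total variation and the prediction can be coupled with Y optimally given S. Formally: inf over conditional distributions Q_{Ŷ|X,S} with Ŷ ⟂ S of P(Ŷ ≠ Y) equals P(S = s_min) · TV(P_{Y|S=0}, P_{Y|S=1}) when X = (Y, S) is fully informative (i.e., Y is a deterministic function of X). -/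
/-!
Write `p s` for the law of `Y` given `S = s`. Under demographic parity the prediction has one
output law `q` in both groups, and within group `s` it agrees with `Y` with probability at most
`∑ y, min (p s y) (q y) = 1 - TV(p s, q)`. The risk is therefore at least
`∑ s, P(S = s) TV(p s, q) ≥ P(S = s_min) TV(p false, p true)` by the triangle inequality.
Equality holds for `q = p s_max`: predict `Y` itself in the majority group, and in the minority
group move `Y` by a maximal coupling kernel from `p s_min` to `p s_max`.
-/

open Finset

section

variable {𝒳 𝒴 : Type*} [Fintype 𝒳] [Fintype 𝒴]

noncomputable def tvDist (p q : 𝒴 → ℝ) : ℝ := 1 / 2 * ∑ y, |p y - q y|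

theorem tvDist_comm (p q : 𝒴 → ℝ) : tvDist p q = tvDist q p := by
  simp only [tvDist, abs_sub_comm]

theorem tvDist_self (p : 𝒴 → ℝ) : tvDist p p = 0 := by
  simp [tvDist]

theorem tvDist_nonneg (p q : 𝒴 → ℝ) : 0 ≤ tvDist p q := by
  unfold tvDist
  positivity

theorem tvDist_triangle (p q r : 𝒴 → ℝ) : tvDist p r ≤ tvDist p q + tvDist q r := by
  simp only [tvDist, ← mul_add, ← sum_add_distrib]
  gcongr with y
  exact abs_sub_le _ _ _

theorem tvDist_eq_one_sub_sum_min {p q : 𝒴 → ℝ} (hp : ∑ y, p y = 1) (hq : ∑ y, q y = 1) :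
    tvDist p q = 1 - ∑ y, min (p y) (q y) := by
  have habs : ∀ y, |p y - q y| = p y + q y - 2 * min (p y) (q y) := fun y => by
    linarith [max_sub_min_eq_abs' (p y) (q y), min_add_max (p y) (q y)]
  simp only [tvDist, habs, sum_sub_distrib, sum_add_distrib, hp, hq, ← mul_sum]
  ring

/-- A Markov kernel `K` from `p` to `q` under which `p` stays in place with probability
`∑ y, min (p y) (q y)`, the largest value any coupling of `p` and `q` allows. -/
structure IsMaximalCouplingKernel (p q : 𝒴 → ℝ) (K : 𝒴 → 𝒴 → ℝ) : Prop where
  nonneg : ∀ y y', 0 ≤ K y y'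
  sum_eq_one : ∀ y, ∑ y', K y y' = 1
  transport : ∀ y', ∑ y, p y * K y y' = q y'
  diag : ∀ y, p y * K y y = min (p y) (q y)

theorem isMaximalCouplingKernel_self [DecidableEq 𝒴] (p : 𝒴 → ℝ) :
    IsMaximalCouplingKernel p p fun y y' => if y = y' then 1 else 0 where
  nonneg y y' := by split_ifs <;> norm_num
  sum_eq_one y := by simp
  transport y' := by simp
  diag y := by simp

/-- Where `p y = 0`, the junk value `min (p y) (q y) / p y = 0` makes row `y` the normalized
excess `q - min p q`, so it is still a probability vector. -/
noncomputable def maximalCouplingKernel [DecidableEq 𝒴] (p q : 𝒴 → ℝ) (y y' : 𝒴) : ℝ :=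
  (if y = y' then min (p y) (q y) / p y else 0) +
    (1 - min (p y) (q y) / p y) * ((q y' - min (p y') (q y')) / ∑ z, (q z - min (p z) (q z)))

theorem isMaximalCouplingKernel_maximalCouplingKernel [DecidableEq 𝒴] {p q : 𝒴 → ℝ}
    (hp : p ∈ stdSimplex ℝ 𝒴) (hq : q ∈ stdSimplex ℝ 𝒴)
    (hD : 0 < ∑ z, (q z - min (p z) (q z))) :
    IsMaximalCouplingKernel p q (maximalCouplingKernel p q) := by
  set D := ∑ z, (q z - min (p z) (q z))
  have hw0 : ∀ y, 0 ≤ min (p y) (q y) / p y := fun y =>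
    div_nonneg (le_min (hp.1 y) (hq.1 y)) (hp.1 y)
  have hw1 : ∀ y, min (p y) (q y) / p y ≤ 1 := fun y => div_le_one_of_le₀ (min_le_left _ _) (hp.1 y)
  have hpw : ∀ y, p y * (min (p y) (q y) / p y) = min (p y) (q y) := fun y => by
    rcases (hp.1 y).eq_or_lt with h | h
    · simp [← h, min_eq_left (hq.1 y)]
    · exact mul_div_cancel₀ _ h.ne'
  have hmass : ∀ y y', p y * maximalCouplingKernel p q y y' =
      (if y = y' then min (p y) (q y) else 0) +
        (p y - min (p y) (q y)) * ((q y' - min (p y') (q y')) / D) := fun y y' => by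
    rw [maximalCouplingKernel, mul_add, mul_ite, mul_zero, hpw, ← mul_assoc, mul_one_sub, hpw]
  refine ⟨fun y y' => ?_, fun y => ?_, fun y' => ?_, fun y => ?_⟩
  · have := sub_nonneg.2 (min_le_right (p y') (q y'))
    have := hw0 y
    have := hw1 y
    unfold maximalCouplingKernel
    split_ifs <;> positivity
  · simp only [maximalCouplingKernel, sum_add_distrib, sum_ite_eq, mem_univ, if_true, ← mul_sum,
      ← sum_div]
    rw [div_self hD.ne', mul_one, add_sub_cancel]
  · have hexcess : ∑ y, (p y - min (p y) (q y)) = D := by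
      simp only [D, sum_sub_distrib, hp.2, hq.2]
    simp only [hmass, sum_add_distrib, sum_ite_eq', mem_univ, if_true, ← sum_mul, hexcess,
      mul_div_cancel₀ _ hD.ne']
    ring
  · have hzero : (p y - min (p y) (q y)) * (q y - min (p y) (q y)) = 0 := by
      rcases le_total (p y) (q y) with h | h <;> simp [h]
    rw [hmass, if_pos rfl, ← mul_div_assoc, hzero, zero_div, add_zero]

theorem exists_isMaximalCouplingKernel [DecidableEq 𝒴] {p q : 𝒴 → ℝ}
    (hp : p ∈ stdSimplex ℝ 𝒴) (hq : q ∈ stdSimplex ℝ 𝒴) :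
    ∃ K, IsMaximalCouplingKernel p q K := by
  rcases (sum_nonneg fun z _ => sub_nonneg.2 (min_le_right (p z) (q z))).eq_or_lt with hD | hD
  · have hqp : ∀ z ∈ univ, q z ≤ p z := fun z hz => by
      have := (sum_eq_zero_iff_of_nonneg fun z _ => sub_nonneg.2 (min_le_right (p z) (q z))).1
        hD.symm z hz
      linarith [min_le_left (p z) (q z)]
    obtain rfl : p = q :=
      funext fun z => ((sum_eq_sum_iff_of_le hqp).1 (hq.2.trans hp.2.symm) z (mem_univ z)).symm
    exact ⟨_, isMaximalCouplingKernel_self p⟩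
  · exact ⟨_, isMaximalCouplingKernel_maximalCouplingKernel hp hq hD⟩

section NormalizedLaw

variable [DecidableEq 𝒴]

noncomputable def normalizedLaw (f : 𝒳 → 𝒴) (w : 𝒳 → ℝ) (y : 𝒴) : ℝ :=
  (∑ x, if f x = y then w x else 0) / ∑ x, w x

theorem sum_mul_comp_eq {w : 𝒳 → ℝ} (hw : ∑ x, w x ≠ 0) (f : 𝒳 → 𝒴) (g : 𝒴 → ℝ) :
    ∑ x, w x * g (f x) = (∑ x, w x) * ∑ y, normalizedLaw f w y * g y := by
  simp only [normalizedLaw, mul_sum, ← mul_assoc, mul_div_cancel₀ _ hw, sum_mul, ite_mul, zero_mul]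
  rw [sum_comm]
  simp

theorem sum_normalizedLaw {w : 𝒳 → ℝ} (hw : ∑ x, w x ≠ 0) (f : 𝒳 → 𝒴) :
    ∑ y, normalizedLaw f w y = 1 := by
  simpa [hw] using (sum_mul_comp_eq hw f 1).symm

theorem normalizedLaw_mem_stdSimplex {w : 𝒳 → ℝ} (hw : ∀ x, 0 ≤ w x) (hM : 0 < ∑ x, w x)
    (f : 𝒳 → 𝒴) : normalizedLaw f w ∈ stdSimplex ℝ 𝒴 :=
  ⟨fun y => div_nonneg (sum_nonneg fun x _ => by split_ifs <;> simp [hw]) hM.le,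
    sum_normalizedLaw hM.ne' f⟩

theorem sum_mul_apply_comp_le_sum_min {w : 𝒳 → ℝ} (hw : ∀ x, 0 ≤ w x) (f : 𝒳 → 𝒴)
    {Q : 𝒳 → 𝒴 → ℝ} (hQ0 : ∀ x y, 0 ≤ Q x y) (hQ1 : ∀ x, ∑ y, Q x y = 1) :
    ∑ x, w x * Q x (f x) ≤ ∑ y, min (∑ x, if f x = y then w x else 0) (∑ x, w x * Q x y) := by
  have hQle : ∀ x y, Q x y ≤ 1 := fun x y =>
    hQ1 x ▸ single_le_sum (fun y _ => hQ0 x y) (mem_univ y)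
  calc ∑ x, w x * Q x (f x) = ∑ y, ∑ x, if f x = y then w x * Q x y else 0 := by
        rw [sum_comm]
        simp
    _ ≤ _ := by
      gcongr with y
      refine le_min (sum_le_sum fun x _ => ?_) (sum_le_sum fun x _ => ?_) <;> split_ifs
      · exact mul_le_of_le_one_right (hw x) (hQle x y)
      · rfl
      · rfl
      · exact mul_nonneg (hw x) (hQ0 x y)

theorem mul_tvDist_le_sum_mul_one_sub {w : 𝒳 → ℝ} (hw : ∀ x, 0 ≤ w x) (hM : 0 < ∑ x, w x)
    (f : 𝒳 → 𝒴) {Q : 𝒳 → 𝒴 → ℝ} (hQ0 : ∀ x y, 0 ≤ Q x y) (hQ1 : ∀ x, ∑ y, Q x y = 1)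
    {q : 𝒴 → ℝ} (hq : ∀ y, ∑ x, w x * Q x y = (∑ x, w x) * q y) :
    (∑ x, w x) * tvDist (normalizedLaw f w) q ≤ ∑ x, w x * (1 - Q x (f x)) := by
  have hq1 : ∑ y, q y = 1 := by
    refine mul_left_cancel₀ hM.ne' ?_
    simp only [mul_one, mul_sum, ← hq]
    rw [sum_comm]
    simp [← mul_sum, hQ1]
  have hmin : ∀ y, min (∑ x, if f x = y then w x else 0) (∑ x, w x * Q x y) =
      (∑ x, w x) * min (normalizedLaw f w y) (q y) := fun y => by
    rw [hq, mul_min_of_nonneg _ _ hM.le, normalizedLaw, mul_div_cancel₀ _ hM.ne']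
  have hcorrect := sum_mul_apply_comp_le_sum_min hw f hQ0 hQ1
  simp only [hmin, ← mul_sum] at hcorrect
  rw [tvDist_eq_one_sub_sum_min (sum_normalizedLaw hM.ne' f) hq1]
  simp only [mul_one_sub, sum_sub_distrib]
  linarith

theorem IsMaximalCouplingKernel.sum_mul_comp_apply {w : 𝒳 → ℝ} (hM : ∑ x, w x ≠ 0)
    {f : 𝒳 → 𝒴} {q : 𝒴 → ℝ} {K : 𝒴 → 𝒴 → ℝ}
    (hK : IsMaximalCouplingKernel (normalizedLaw f w) q K) (y : 𝒴) :
    ∑ x, w x * K (f x) y = (∑ x, w x) * q y := by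
  rw [sum_mul_comp_eq hM f (K · y), hK.transport]

theorem IsMaximalCouplingKernel.sum_mul_one_sub_comp {w : 𝒳 → ℝ} (hM : ∑ x, w x ≠ 0)
    {f : 𝒳 → 𝒴} {q : 𝒴 → ℝ} {K : 𝒴 → 𝒴 → ℝ}
    (hK : IsMaximalCouplingKernel (normalizedLaw f w) q K) :
    ∑ x, w x * (1 - K (f x) (f x)) = (∑ x, w x) * tvDist (normalizedLaw f w) q := by
  have hp1 := sum_normalizedLaw hM f
  have hq1 : ∑ y, q y = 1 := by
    simp only [← hK.transport, sum_comm (γ := 𝒴), ← mul_sum, hK.sum_eq_one, mul_one, hp1]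
  rw [tvDist_eq_one_sub_sum_min hp1 hq1, mul_one_sub, ← sum_congr rfl fun y _ => hK.diag y,
    ← sum_mul_comp_eq hM f fun y => K y y]
  simp only [mul_one_sub, sum_sub_distrib]

end NormalizedLaw

theorem min_mul_tvDist_le_sum_mul_tvDist {M : Bool → ℝ} (hM : ∀ s, 0 ≤ M s)
    (p : Bool → 𝒴 → ℝ) (q : 𝒴 → ℝ) :
    min (M false) (M true) * tvDist (p false) (p true) ≤ ∑ s, M s * tvDist (p s) q := by
  have hm := le_min (hM false) (hM true)
  calc _ ≤ min (M false) (M true) * (tvDist (p false) q + tvDist (p true) q) := by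
        rw [tvDist_comm (p true)]
        gcongr
        exact tvDist_triangle _ _ _
    _ ≤ M false * tvDist (p false) q + M true * tvDist (p true) q := by
        rw [mul_add]
        gcongr
        · exact tvDist_nonneg _ _
        · exact min_le_left _ _
        · exact tvDist_nonneg _ _
        · exact min_le_right _ _
    _ = ∑ s, M s * tvDist (p s) q := by rw [Fintype.sum_bool, add_comm]

theorem exists_sum_mul_tvDist_eq_min_mul (M : Bool → ℝ) (p : Bool → 𝒴 → ℝ) :
    ∃ s₀, ∑ s, M s * tvDist (p s) (p !s₀) = min (M false) (M true) * tvDist (p false) (p true) := by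
  rcases le_total (M false) (M true) with h | h
  · exact ⟨false, by simp [tvDist_self, min_eq_left h]⟩
  · exact ⟨true, by simp [tvDist_self, min_eq_right h, tvDist_comm]⟩

end

theorem dp_bound_achieved_noiseless_general
    {𝒳 𝒴 : Type*} [Fintype 𝒳] [Fintype 𝒴] [DecidableEq 𝒴]
    (P : 𝒳 × Bool → ℝ)
    (hP0 : ∀ z, 0 ≤ P z)
    (pS : Bool → ℝ) (hpS : ∀ s, pS s = ∑ x, P (x, s))
    (hpos : ∀ s, 0 < pS s)
    (yfun : 𝒳 → 𝒴) :
    IsGLB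
      {r : ℝ | ∃ Q : 𝒳 → Bool → 𝒴 → ℝ,
        (∀ x s y, 0 ≤ Q x s y) ∧ (∀ x s, ∑ y, Q x s y = 1) ∧
        -- demographic parity: the output distribution of Ŷ given S = s is the
        -- same for both values of s
        (∀ y : 𝒴, (∑ x, P (x, false) * Q x false y) / pS false =
                  (∑ x, P (x, true) * Q x true y) / pS true) ∧
        r = ∑ x, ∑ s, P (x, s) * (1 - Q x s (yfun x))}
      (min (pS false) (pS true) *
        ((1 / 2) * ∑ y,
          |(∑ x, if yfun x = y then P (x, false) else 0) / pS false -
           (∑ x, if yfun x = y then P (x, true) else 0) / pS true|)) := by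
  obtain rfl : pS = fun s => ∑ x, P (x, s) := funext hpS
  beta_reduce at hpos ⊢
  have hw (s : Bool) (x : 𝒳) : 0 ≤ P (x, s) := hP0 _
  set p : Bool → 𝒴 → ℝ := fun s => normalizedLaw yfun fun x => P (x, s)
  show IsGLB _ (min (∑ x, P (x, false)) (∑ x, P (x, true)) * tvDist (p false) (p true))
  refine ⟨?_, fun b hb => ?_⟩
  · rintro r ⟨Q, hQ0, hQ1, hDP, rfl⟩
    set q : 𝒴 → ℝ := fun y => (∑ x, P (x, false) * Q x false y) / ∑ x, P (x, false)
    have hq : ∀ s y, ∑ x, P (x, s) * Q x s y = (∑ x, P (x, s)) * q y := by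
      rintro (_ | _) y
      · exact (mul_div_cancel₀ _ (hpos false).ne').symm
      · simp only [q, hDP y, mul_div_cancel₀ _ (hpos true).ne']
    calc _ ≤ ∑ s, (∑ x, P (x, s)) * tvDist (p s) q :=
          min_mul_tvDist_le_sum_mul_tvDist (fun s => (hpos s).le) p q
      _ ≤ ∑ s, ∑ x, P (x, s) * (1 - Q x s (yfun x)) := sum_le_sum fun s _ =>
          mul_tvDist_le_sum_mul_one_sub (hw s) (hpos s) yfun (hQ0 · s) (hQ1 · s) (hq s)
      _ = _ := sum_comm
  · obtain ⟨s₀, hs₀⟩ := exists_sum_mul_tvDist_eq_min_mul (fun s => ∑ x, P (x, s)) p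
    choose K hK using fun s => exists_isMaximalCouplingKernel
      (normalizedLaw_mem_stdSimplex (hw s) (hpos s) yfun)
      (normalizedLaw_mem_stdSimplex (hw !s₀) (hpos !s₀) yfun)
    have hlaw (s : Bool) (y : 𝒴) :
        (∑ x, P (x, s) * K s (yfun x) y) / ∑ x, P (x, s) = p (!s₀) y := by
      rw [(hK s).sum_mul_comp_apply (hpos s).ne', mul_div_cancel_left₀ _ (hpos s).ne']
    refine hb ⟨fun x s => K s (yfun x), fun x s => (hK s).nonneg _, fun x s => (hK s).sum_eq_one _,
      fun y => (hlaw false y).trans (hlaw true y).symm, ?_⟩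
    rw [← hs₀, sum_comm]
    exact sum_congr rfl fun s _ => ((hK s).sum_mul_one_sub_comp (hpos s).ne').symm

/-- In the noiseless (fully informative) case where Y is a
deterministic function `yfun` of X, the infimum over demographic-parity
randomized decision rules `Q_{Ŷ|X,S}` of the risk `P(Ŷ ≠ Y)` equals
`P(S = s_min) · TV(P_{Y|S=0}, P_{Y|S=1})`, where `P(S = s_min) = min (P(S=0)) (P(S=1))`. -/
theorem dp_bound_achieved_noiseless
    {𝒳 𝒴 : Type*} [Fintype 𝒳] [Fintype 𝒴] [DecidableEq 𝒴]
    (P : 𝒳 × Bool → ℝ)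
    (hP0 : ∀ z, 0 ≤ P z) (hP1 : ∑ z, P z = 1)
    (pS : Bool → ℝ) (hpS : ∀ s, pS s = ∑ x, P (x, s))
    (hpos : ∀ s, 0 < pS s)
    (yfun : 𝒳 → 𝒴) :
    IsGLB
      {r : ℝ | ∃ Q : 𝒳 → Bool → 𝒴 → ℝ,
        (∀ x s y, 0 ≤ Q x s y) ∧ (∀ x s, ∑ y, Q x s y = 1) ∧
        -- demographic parity: the output distribution of Ŷ given S = s is the
        -- same for both values of s
        (∀ y : 𝒴, (∑ x, P (x, false) * Q x false y) / pS false =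
                  (∑ x, P (x, true) * Q x true y) / pS true) ∧
        r = ∑ x, ∑ s, P (x, s) * (1 - Q x s (yfun x))}
      (min (pS false) (pS true) *
        ((1 / 2) * ∑ y,
          |(∑ x, if yfun x = y then P (x, false) else 0) / pS false -
           (∑ x, if yfun x = y then P (x, true) else 0) / pS true|)) :=
  dp_bound_achieved_noiseless_general P hP0 pS hpS hpos yfun
end

section
/- The minimization over conditional distributions Q_{Ŷ|X,S} of E_{P_{X,S}}[TV(Q_{Ŷ|X=x,S=s}, P_{Y|X=x,S=s})] subject to a fairness constraint E_{s∼P_S}[d(Q_{Ŷ|S=s}, Q_{Ŷ})] ≤ ε is equivalent to the joint-coupling optimal transport problem: minimize E_{P_{X,S} × Q_{Y,Ŷ|X,S}}[1{Ŷ ≠ Y}] over joint conditionals Q_{Y,Ŷ|X,S} subject to the marginal constraint Q_{Y|X,S} = P_{Y|X,S} and the same fairness constraint on Q_{Ŷ}; the two problems have the same optimal value. -/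
/-!
The fairness constraint sees a joint conditional `Q_{Y,Ŷ|X,S}` only through its `Ŷ`-marginal, so
both problems range over the same marginals `q = Q_{Ŷ|X=x,S=s}`, and it suffices to compare the
costs pointwise in `(x, s)`. A coupling of `p = P_{Y|X=x,S=s}` and `q` puts mass at most
`min (p y) (q y)` on the diagonal, so its mismatch probability is at least
`1 - ∑ y, min (p y) (q y) = TV(p, q)`; the maximal coupling attains this bound.
-/

open Finset

theorem csInf_eq_csInf_of_subset_of_forall_exists_le {α : Type*}
    [ConditionallyCompleteLattice α] {A B : Set α} (hAB : A ⊆ B)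
    (hBA : ∀ b ∈ B, ∃ a ∈ A, a ≤ b) (hB : BddBelow B) : sInf A = sInf B := by
  obtain rfl | hBne := B.eq_empty_or_nonempty
  · rw [Set.subset_empty_iff.mp hAB]
  obtain ⟨a₀, ha₀, -⟩ := hBA _ hBne.some_mem
  refine le_antisymm (le_csInf hBne fun b hb => ?_) (csInf_le_csInf hB ⟨a₀, ha₀⟩ hAB)
  obtain ⟨a, ha, hab⟩ := hBA b hb
  exact (csInf_le (hB.mono hAB) ha).trans hab

section Coupling

variable {ι K : Type*} [Fintype ι] [Field K] [LinearOrder K] [IsStrictOrderedRing K]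

theorem half_sum_abs_sub_eq (p q : ι → K) :
    (1 / 2) * ∑ i, |q i - p i| = (∑ i, p i + ∑ i, q i) / 2 - ∑ i, min (p i) (q i) := by
  have h : ∀ i, |q i - p i| = p i + q i - 2 * min (p i) (q i) := fun i => by
    rw [← max_sub_min_eq_abs, ← min_add_max (p i) (q i)]; ring
  simp only [h, sum_sub_distrib, sum_add_distrib, ← mul_sum]
  ring

variable [DecidableEq ι]

theorem sum_offDiag_eq_sum_sub_sum_diag {M : Type*} [AddCommGroup M] (J : ι × ι → M) :
    (∑ z : ι × ι, if z.2 ≠ z.1 then J z else 0) = ∑ z, J z - ∑ i, J (i, i) := by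
  have hsplit : ∀ z : ι × ι, (if z.2 ≠ z.1 then J z else 0) =
      J z - if z.1 = z.2 then J z else 0 := by
    intro z
    by_cases h : z.1 = z.2 <;> simp [h, eq_comm]
  simp [hsplit, sum_sub_distrib, Fintype.sum_prod_type (fun z => if z.1 = z.2 then J z else 0)]

theorem half_sum_abs_sub_le_of_coupling {J : ι × ι → K} {p q : ι → K} (hJ : ∀ z, 0 ≤ J z)
    (hrow : ∀ i, ∑ j, J (i, j) = p i) (hcol : ∀ j, ∑ i, J (i, j) = q j) :
    (1 / 2) * ∑ i, |q i - p i| ≤ ∑ z : ι × ι, if z.2 ≠ z.1 then J z else 0 := by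
  have hp : ∑ i, p i = ∑ z, J z := by simp [← hrow, Fintype.sum_prod_type]
  have hq : ∑ j, q j = ∑ z, J z := by simp only [← hcol]; rw [sum_comm, Fintype.sum_prod_type]
  have hdiag : ∀ i, J (i, i) ≤ min (p i) (q i) := fun i =>
    le_min (hrow i ▸ single_le_sum (fun j _ => hJ (i, j)) (mem_univ i))
      (hcol i ▸ single_le_sum (fun j _ => hJ (j, i)) (mem_univ i))
  rw [half_sum_abs_sub_eq, sum_offDiag_eq_sum_sub_sum_diag, hp, hq]
  linarith [sum_le_sum fun i (_ : i ∈ univ) => hdiag i]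

theorem exists_coupling_offDiag_eq_half_sum_abs_sub {p q : ι → K} (hp : ∀ i, 0 ≤ p i)
    (hq : ∀ i, 0 ≤ q i) (hpq : ∑ i, p i = ∑ i, q i) :
    ∃ J : ι × ι → K, (∀ z, 0 ≤ J z) ∧ (∀ i, ∑ j, J (i, j) = p i) ∧
      (∀ j, ∑ i, J (i, j) = q j) ∧
      (∑ z : ι × ι, if z.2 ≠ z.1 then J z else 0) = (1 / 2) * ∑ i, |q i - p i| := by
  -- the maximal coupling: `min p q` on the diagonal, the normalised product of the excesses off it
  set m : ι → K := fun i => min (p i) (q i)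
  set r : ι → K := fun i => p i - m i
  set s : ι → K := fun i => q i - m i
  set T : K := ∑ i, r i
  have hr : ∀ i, 0 ≤ r i := fun i => sub_nonneg.2 (min_le_left _ _)
  have hs : ∀ i, 0 ≤ s i := fun i => sub_nonneg.2 (min_le_right _ _)
  have hsT : ∑ i, s i = T := by simp only [s, r, T, sum_sub_distrib, hpq]
  have hrs : ∀ i, r i * s i = 0 := fun i => by
    rcases le_total (p i) (q i) with h | h <;> simp [r, s, m, h]
  have hcancel : ∀ a : K, 0 ≤ a → a ≤ T → a * T / T = a := fun a ha haT => by
    rcases eq_or_ne T 0 with hT | hT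
    · simp [le_antisymm (hT ▸ haT) ha]
    · exact mul_div_cancel_right₀ a hT
  set J : ι × ι → K := fun z => (if z.1 = z.2 then m z.1 else 0) + r z.1 * s z.2 / T
  have hrow : ∀ i, ∑ j, J (i, j) = p i := fun i => by
    simp only [J]
    rw [sum_add_distrib, sum_ite_eq, if_pos (mem_univ i), ← sum_div, ← mul_sum, hsT,
      hcancel _ (hr i) (single_le_sum (fun j _ => hr j) (mem_univ i))]
    exact add_sub_cancel _ _
  have hcol : ∀ j, ∑ i, J (i, j) = q j := fun j => by
    simp only [J]
    rw [sum_add_distrib, sum_ite_eq', if_pos (mem_univ j), ← sum_div, ← sum_mul, mul_comm,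
      hcancel _ (hs j) (hsT ▸ single_le_sum (fun i _ => hs i) (mem_univ j))]
    exact add_sub_cancel _ _
  have hdiag : ∀ i, J (i, i) = m i := fun i => by simp [J, hrs]
  refine ⟨J, fun z => add_nonneg (ite_nonneg (le_min (hp _) (hq _)) le_rfl)
    (div_nonneg (mul_nonneg (hr _) (hs _)) (sum_nonneg fun i _ => hr i)), hrow, hcol, ?_⟩
  rw [sum_offDiag_eq_sum_sub_sum_diag, half_sum_abs_sub_eq, Fintype.sum_prod_type]
  simp only [hrow, hdiag, ← hpq]
  ring

end Coupling

open Finset in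
theorem fair_tv_problem_eq_coupling_problem_general
    {𝒳 𝒮 𝒴 : Type*} [Fintype 𝒳] [Fintype 𝒮] [Fintype 𝒴] [DecidableEq 𝒴]
    (P : 𝒳 × 𝒮 × 𝒴 → ℝ)
    (hP0 : ∀ z, 0 ≤ P z)
    (pXS : 𝒳 → 𝒮 → ℝ) (hpXS : ∀ x s, pXS x s = ∑ y, P (x, s, y))
    (hpos : ∀ x s, 0 < pXS x s)
    (pS : 𝒮 → ℝ)
    (condP : 𝒳 → 𝒮 → 𝒴 → ℝ) (hcondP : ∀ x s y, condP x s y = P (x, s, y) / pXS x s)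
    (d : (𝒴 → ℝ) → (𝒴 → ℝ) → ℝ) (ε : ℝ) :
    sInf {r : ℝ | ∃ Q : 𝒳 → 𝒮 → 𝒴 → ℝ,
        (∀ x s y, 0 ≤ Q x s y) ∧ (∀ x s, ∑ y, Q x s y = 1) ∧
        (∑ s, pS s *
            d (fun y => (∑ x, pXS x s * Q x s y) / pS s)
              (fun y => ∑ x, ∑ s', pXS x s' * Q x s' y) ≤ ε) ∧
        r = ∑ x, ∑ s, pXS x s *
              ((1 / 2) * ∑ y, |Q x s y - condP x s y|)} =
    sInf {r : ℝ | ∃ QJ : 𝒳 → 𝒮 → 𝒴 × 𝒴 → ℝ,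
        (∀ x s z, 0 ≤ QJ x s z) ∧ (∀ x s, ∑ z, QJ x s z = 1) ∧
        -- marginal constraint Q_{Y|X,S} = P_{Y|X,S} (first coordinate is Y)
        (∀ x s y, ∑ yh, QJ x s (y, yh) = condP x s y) ∧
        -- fairness constraint on the induced Ŷ-marginals (second coordinate is Ŷ)
        (∑ s, pS s *
            d (fun yh => (∑ x, pXS x s * ∑ y, QJ x s (y, yh)) / pS s)
              (fun yh => ∑ x, ∑ s', pXS x s' * ∑ y, QJ x s' (y, yh)) ≤ ε) ∧
        r = ∑ x, ∑ s, pXS x s *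
              (∑ z : 𝒴 × 𝒴, if z.2 ≠ z.1 then QJ x s z else 0)} := by
  have hcond0 : ∀ x s y, 0 ≤ condP x s y := fun x s y =>
    hcondP x s y ▸ div_nonneg (hP0 _) (hpos x s).le
  have hcond1 : ∀ x s, ∑ y, condP x s y = 1 := fun x s => by
    simp only [hcondP, ← sum_div, ← hpXS, div_self (hpos x s).ne']
  refine csInf_eq_csInf_of_subset_of_forall_exists_le ?_ ?_ ⟨0, ?_⟩
  · rintro r ⟨Q, hQ0, hQ1, hfair, rfl⟩
    choose J hJ0 hJrow hJcol hJcost using fun x s =>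
      exists_coupling_offDiag_eq_half_sum_abs_sub (hcond0 x s) (hQ0 x s)
        ((hcond1 x s).trans (hQ1 x s).symm)
    refine ⟨J, hJ0, fun x s => ?_, hJrow, by simpa only [hJcol] using hfair, by simp only [hJcost]⟩
    rw [Fintype.sum_prod_type]
    simp only [hJrow, hcond1]
  · rintro r ⟨J, hJ0, hJ1, hJrow, hfair, rfl⟩
    refine ⟨_, ⟨fun x s yh => ∑ y, J x s (y, yh), fun x s yh => sum_nonneg fun y _ => hJ0 x s _,
      fun x s => ?_, hfair, rfl⟩, ?_⟩
    · rw [sum_comm, ← Fintype.sum_prod_type, hJ1]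
    · gcongr with x _ s _
      · exact (hpos x s).le
      · exact half_sum_abs_sub_le_of_coupling (hJ0 x s) (hJrow x s) fun _ => rfl
  · rintro r ⟨J, hJ0, -, -, -, rfl⟩
    refine sum_nonneg fun x _ => sum_nonneg fun s _ => mul_nonneg (hpos x s).le ?_
    exact sum_nonneg fun z _ => ite_nonneg (hJ0 x s z) le_rfl

open Finset in
/-- The fairness-constrained minimization of the expected total
variation `E_{P_{X,S}}[TV(Q_{Ŷ|X,S}, P_{Y|X,S})]` over conditional rules
`Q_{Ŷ|X,S}` has the same optimal value as the joint-coupling optimal transport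
problem minimizing `E[1{Ŷ ≠ Y}]` over joint conditionals `Q_{Y,Ŷ|X,S}` subject
to the marginal constraint `Q_{Y|X,S} = P_{Y|X,S}` and the same fairness
constraint on the induced Ŷ-marginals. -/
theorem fair_tv_problem_eq_coupling_problem
    {𝒳 𝒮 𝒴 : Type*} [Fintype 𝒳] [Fintype 𝒮] [Fintype 𝒴] [DecidableEq 𝒴]
    (P : 𝒳 × 𝒮 × 𝒴 → ℝ)
    (hP0 : ∀ z, 0 ≤ P z) (hP1 : ∑ z, P z = 1)
    (pXS : 𝒳 → 𝒮 → ℝ) (hpXS : ∀ x s, pXS x s = ∑ y, P (x, s, y))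
    (hpos : ∀ x s, 0 < pXS x s)
    (pS : 𝒮 → ℝ) (hpS : ∀ s, pS s = ∑ x, pXS x s)
    (condP : 𝒳 → 𝒮 → 𝒴 → ℝ) (hcondP : ∀ x s y, condP x s y = P (x, s, y) / pXS x s)
    (d : (𝒴 → ℝ) → (𝒴 → ℝ) → ℝ) (ε : ℝ) :
    sInf {r : ℝ | ∃ Q : 𝒳 → 𝒮 → 𝒴 → ℝ,
        (∀ x s y, 0 ≤ Q x s y) ∧ (∀ x s, ∑ y, Q x s y = 1) ∧
        (∑ s, pS s *
            d (fun y => (∑ x, pXS x s * Q x s y) / pS s)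
              (fun y => ∑ x, ∑ s', pXS x s' * Q x s' y) ≤ ε) ∧
        r = ∑ x, ∑ s, pXS x s *
              ((1 / 2) * ∑ y, |Q x s y - condP x s y|)} =
    sInf {r : ℝ | ∃ QJ : 𝒳 → 𝒮 → 𝒴 × 𝒴 → ℝ,
        (∀ x s z, 0 ≤ QJ x s z) ∧ (∀ x s, ∑ z, QJ x s z = 1) ∧
        -- marginal constraint Q_{Y|X,S} = P_{Y|X,S} (first coordinate is Y)
        (∀ x s y, ∑ yh, QJ x s (y, yh) = condP x s y) ∧
        -- fairness constraint on the induced Ŷ-marginals (second coordinate is Ŷ)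
        (∑ s, pS s *
            d (fun yh => (∑ x, pXS x s * ∑ y, QJ x s (y, yh)) / pS s)
              (fun yh => ∑ x, ∑ s', pXS x s' * ∑ y, QJ x s' (y, yh)) ≤ ε) ∧
        r = ∑ x, ∑ s, pXS x s *
              (∑ z : 𝒴 × 𝒴, if z.2 ≠ z.1 then QJ x s z else 0)} :=
  fair_tv_problem_eq_coupling_problem_general P hP0 pXS hpXS hpos pS condP hcondP d ε
end
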